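/- arXiv:1909.10728 — 6 statements merged into one kernel-verified Lean document; each statement's English description precedes it below -/
import Mathlib

section
/- Assume 1 ≤ k(n) < d(n) for all n ≥ 1. Then t(0)/r(0) = 0, the sequence (t(n)/r(n))_{n≥0} of real numbers is strictly increasing (t(n)/r(n) < t(n+1)/r(n+1) for all n ≥ 0), and t(n)/r(n) < 1/2 for all n ≥ 0. -/
/-! Write `q n = t n / r n`. The recursion says that `q (n+1)` is the weighted mean of `q n` and
`1 - q n` with weights `d (n+1)` and `k (n+1)`. As long as `q n < 1/2` the point `1 - q n` lies
above `q n`, so the mean moves up, and since `k < d` the weight on `q n` dominates, which gives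
`1/2 - q (n+1) = (d - k) / (d + k) * (1/2 - q n) > 0`. -/

lemma lt_half_of_weighted_mean {a b q : ℝ} (hba : b < a) (hab : 0 < a + b) (hq : q < 1 / 2) :
    (a * q + b * (1 - q)) / (a + b) < 1 / 2 := by
  rw [div_lt_iff₀ hab]
  nlinarith

lemma lt_weighted_mean {a b q : ℝ} (ha : 0 ≤ a) (hb : 0 < b) (hq : q < 1 / 2) :
    q < (a * q + b * (1 - q)) / (a + b) := by
  rw [lt_div_iff₀ (by linarith)]
  nlinarith

section Recursion

variable {d k r t : ℕ → ℕ}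

lemma prod_range_succ_pos (hd0 : d 0 = 1) (hk : ∀ n, 1 ≤ n → 1 ≤ k n)
    (hr : ∀ n, r n = ∏ j ∈ Finset.range (n + 1), (d j + k j)) (n : ℕ) : 0 < r n := by
  rw [hr]
  refine Finset.prod_pos fun j _ => ?_
  rcases Nat.eq_zero_or_pos j with rfl | hj
  · simp [hd0]
  · exact Nat.add_pos_right _ (hk j hj)

lemma div_succ_eq_weighted_mean (hr : ∀ n, r n = ∏ j ∈ Finset.range (n + 1), (d j + k j))
    (ht : ∀ n, t (n + 1) = d (n + 1) * t n + k (n + 1) * (r n - t n)) {n : ℕ}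
    (hrn : 0 < r n) (hdk : 0 < d (n + 1) + k (n + 1)) (htr : t n ≤ r n) :
    (t (n + 1) : ℝ) / r (n + 1) =
      (d (n + 1) * ((t n : ℝ) / r n) + k (n + 1) * (1 - (t n : ℝ) / r n)) /
        (d (n + 1) + k (n + 1)) := by
  rw [ht, hr (n + 1), Finset.prod_range_succ, ← hr n]
  have hrn' : (r n : ℝ) ≠ 0 := by positivity
  have hdk' : ((d (n + 1) + k (n + 1) : ℕ) : ℝ) ≠ 0 := by positivity
  push_cast [htr] at hdk' ⊢
  field_simp

end Recursion

theorem stmt_1_general (d k : ℕ → ℕ) (hd0 : d 0 = 1)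
    (hk : ∀ n, 1 ≤ n → 1 ≤ k n) (hkd : ∀ n, 1 ≤ n → k n < d n)
    (r t : ℕ → ℕ)
    (hr : ∀ n, r n = ∏ j ∈ Finset.range (n + 1), (d j + k j))
    (ht0 : t 0 = 0)
    (ht : ∀ n, t (n + 1) = d (n + 1) * t n + k (n + 1) * (r n - t n)) :
    (t 0 : ℝ) / (r 0 : ℝ) = 0 ∧
    (∀ n : ℕ, (t n : ℝ) / (r n : ℝ) < (t (n + 1) : ℝ) / (r (n + 1) : ℝ)) ∧
    (∀ n : ℕ, (t n : ℝ) / (r n : ℝ) < 1 / 2) := by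
  have hrpos := prod_range_succ_pos hd0 hk hr
  have hk' (n : ℕ) : 1 ≤ k (n + 1) := hk (n + 1) n.succ_pos
  have hkd' (n : ℕ) : k (n + 1) < d (n + 1) := hkd (n + 1) n.succ_pos
  have hle {n : ℕ} (h : (t n : ℝ) / r n < 1 / 2) : t n ≤ r n := by
    have := (div_le_one (by exact_mod_cast hrpos n : (0 : ℝ) < r n)).1 (h.le.trans (by norm_num))
    exact_mod_cast this
  have hstep (n : ℕ) (h : (t n : ℝ) / r n < 1 / 2) :=
    div_succ_eq_weighted_mean hr ht (hrpos n) (by have := hk' n; omega) (hle h)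
  have hhalf (n : ℕ) : (t n : ℝ) / r n < 1 / 2 := by
    induction n with
    | zero => simp [ht0]
    | succ n ih =>
      rw [hstep n ih]
      exact lt_half_of_weighted_mean (by exact_mod_cast hkd' n)
        (by have := hk' n; positivity) ih
  refine ⟨by simp [ht0], fun n => ?_, hhalf⟩
  rw [hstep n (hhalf n)]
  exact lt_weighted_mean (Nat.cast_nonneg _) (by exact_mod_cast hk' n) (hhalf n)

/-- with 1 ≤ k(n) < d(n) for all n ≥ 1, one has t(0)/r(0) = 0,
the sequence t(n)/r(n) is strictly increasing, and t(n)/r(n) < 1/2 for all n. -/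
theorem stmt_1 (d k : ℕ → ℕ) (hd0 : d 0 = 1) (hk0 : k 0 = 0)
    (hk : ∀ n, 1 ≤ n → 1 ≤ k n) (hkd : ∀ n, 1 ≤ n → k n < d n)
    (r t : ℕ → ℕ)
    (hr : ∀ n, r n = ∏ j ∈ Finset.range (n + 1), (d j + k j))
    (ht0 : t 0 = 0)
    (ht : ∀ n, t (n + 1) = d (n + 1) * t n + k (n + 1) * (r n - t n)) :
    (t 0 : ℝ) / (r 0 : ℝ) = 0 ∧
    (∀ n : ℕ, (t n : ℝ) / (r n : ℝ) < (t (n + 1) : ℝ) / (r (n + 1) : ℝ)) ∧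
    (∀ n : ℕ, (t n : ℝ) / (r n : ℝ) < 1 / 2) :=
  stmt_1_general d k hd0 hk hkd r t hr ht0 ht
end

section
/- Assume 1 ≤ k(n) < d(n) for all n ≥ 1. Set ω = k(1)/(k(1)+d(1)), assume the series ω' = ∑_{n=2}^∞ k(n)/(k(n)+d(n)) converges, and assume ω' < ω < 1/2. Then for all n ≥ 1 one has ω ≤ t(n)/r(n) ≤ ω + ω' < 2ω. -/
/-! Writing `x n = t n / r n` and `p n = k n / (k n + d n)`, the recurrence becomes
`x (n+1) = x n + p (n+1) * (1 - 2 * x n)`. Since `0 ≤ x n`, each step raises `x` by at most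
`p (n+1)`, which gives the upper bound `x 1 + ω'`. Since `p ≤ 1/2`, the step is the affine map
`x ↦ (1 - 2p) x + p`, which is monotone and does not lower any point `≤ 1/2`, so `x n` never
drops below `x 1 = ω`. -/

open Finset

section Step

variable {x p : ℕ → ℝ}

theorem le_of_step (hp0 : ∀ n, 0 ≤ p n) (hp : ∀ n, p n ≤ 1 / 2) (hx0 : x 0 ≤ 1 / 2)
    (hstep : ∀ n, x (n + 1) = x n + p n * (1 - 2 * x n)) (m : ℕ) : x 0 ≤ x m := by
  induction m with
  | zero => exact le_rfl
  | succ m ih =>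
    -- `x (m+1) - x 0 = (1 - 2 p) (x m - x 0) + p (1 - 2 x 0)`
    rw [hstep]
    nlinarith [mul_nonneg (sub_nonneg.mpr ih) (by linarith [hp m] : (0 : ℝ) ≤ 1 - 2 * p m),
      mul_nonneg (hp0 m) (by linarith : (0 : ℝ) ≤ 1 - 2 * x 0)]

theorem le_add_sum_of_step (hx : ∀ n, 0 ≤ x n) (hp0 : ∀ n, 0 ≤ p n)
    (hstep : ∀ n, x (n + 1) = x n + p n * (1 - 2 * x n)) (m : ℕ) :
    x m ≤ x 0 + ∑ i ∈ range m, p i := by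
  induction m with
  | zero => simp
  | succ m ih =>
    rw [hstep, sum_range_succ]
    nlinarith [mul_nonneg (hp0 m) (hx m)]

end Step

theorem div_add_le_half {a b : ℝ} (ha : 0 ≤ a) (hab : a < b) : a / (a + b) ≤ 1 / 2 := by
  rw [div_le_iff₀ (by linarith)]
  linarith

section Recurrence

variable {d k r t : ℕ → ℕ}

theorem succ_eq_mul_of_eq_prod (hr : ∀ n, r n = ∏ j ∈ range (n + 1), (d j + k j)) (n : ℕ) :
    r (n + 1) = (d (n + 1) + k (n + 1)) * r n := by
  rw [hr, hr, prod_range_succ, mul_comm]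

theorem le_of_recurrence (hr : ∀ n, r n = ∏ j ∈ range (n + 1), (d j + k j)) (ht0 : t 0 ≤ r 0)
    (ht : ∀ n, t (n + 1) = d (n + 1) * t n + k (n + 1) * (r n - t n)) (n : ℕ) : t n ≤ r n := by
  induction n with
  | zero => exact ht0
  | succ n ih =>
    rw [ht, succ_eq_mul_of_eq_prod hr, add_mul]
    gcongr
    exact Nat.sub_le _ _

theorem div_succ_eq_of_recurrence (hr : ∀ n, r n = ∏ j ∈ range (n + 1), (d j + k j))
    (ht : ∀ n, t (n + 1) = d (n + 1) * t n + k (n + 1) * (r n - t n)) {n : ℕ}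
    (hl : 0 < d (n + 1) + k (n + 1)) (hrn : 0 < r n) (htr : t n ≤ r n) :
    (t (n + 1) : ℝ) / r (n + 1) =
      t n / r n + k (n + 1) / (k (n + 1) + d (n + 1)) * (1 - 2 * (t n / r n)) := by
  have hl' : (0 : ℝ) < d (n + 1) + k (n + 1) := by exact_mod_cast hl
  have hl'' : (0 : ℝ) < k (n + 1) + d (n + 1) := by linarith
  have hrn' : (0 : ℝ) < r n := by exact_mod_cast hrn
  rw [ht, succ_eq_mul_of_eq_prod hr]
  push_cast [Nat.cast_sub htr]
  field_simp
  ring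

end Recurrence

theorem stmt_2_general (d k : ℕ → ℕ) (hd0 : d 0 = 1)
    (hkd : ∀ n, 1 ≤ n → k n < d n)
    (r t : ℕ → ℕ)
    (hr : ∀ n, r n = ∏ j ∈ Finset.range (n + 1), (d j + k j))
    (ht0 : t 0 = 0)
    (ht : ∀ n, t (n + 1) = d (n + 1) * t n + k (n + 1) * (r n - t n))
    (ω ω' : ℝ)
    (hω : ω = (k 1 : ℝ) / ((k 1 : ℝ) + (d 1 : ℝ)))
    (hsum : Summable (fun n : ℕ => (k (n + 2) : ℝ) / ((k (n + 2) : ℝ) + (d (n + 2) : ℝ))))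
    (hω' : ω' = ∑' n : ℕ, (k (n + 2) : ℝ) / ((k (n + 2) : ℝ) + (d (n + 2) : ℝ)))
    (h1 : ω' < ω) (h2 : ω < 1 / 2) :
    ∀ n : ℕ, 1 ≤ n →
      ω ≤ (t n : ℝ) / (r n : ℝ) ∧ (t n : ℝ) / (r n : ℝ) ≤ ω + ω' ∧ ω + ω' < 2 * ω := by
  have hl : ∀ j, 0 < d j + k j := fun
    | 0 => by simp [hd0]
    | j + 1 => by have := hkd (j + 1) (by omega); omega
  have hrpos : ∀ n, 0 < r n := fun n => hr n ▸ prod_pos fun j _ => hl j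
  have htr := le_of_recurrence hr (by rw [ht0]; exact Nat.zero_le _) ht
  set x : ℕ → ℝ := fun m => (t (m + 1) : ℝ) / r (m + 1)
  have hx0 : x 0 = ω := by
    simp only [x, div_succ_eq_of_recurrence hr ht (hl 1) (hrpos 0) (htr 0), ht0, hω]
    simp
  set p : ℕ → ℝ := fun n => (k (n + 2) : ℝ) / (k (n + 2) + d (n + 2))
  have hx : ∀ m, 0 ≤ x m := fun m => by positivity
  have hp0 : ∀ n, 0 ≤ p n := fun n => by positivity
  have hp : ∀ n, p n ≤ 1 / 2 := fun n =>
    div_add_le_half (Nat.cast_nonneg _) (by exact_mod_cast hkd (n + 2) (by omega))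
  have hstep : ∀ m, x (m + 1) = x m + p m * (1 - 2 * x m) := fun m =>
    div_succ_eq_of_recurrence hr ht (hl _) (hrpos _) (htr _)
  intro n hn
  obtain ⟨m, rfl⟩ : ∃ m, n = m + 1 := ⟨n - 1, by omega⟩
  have hlo := le_of_step hp0 hp (hx0 ▸ h2.le) hstep m
  have hhi := le_add_sum_of_step hx hp0 hstep m
  have hsum_le : ∑ i ∈ range m, p i ≤ ω' := hω' ▸ hsum.sum_le_tsum _ (fun i _ => hp0 i)
  exact ⟨hx0 ▸ hlo, by linarith, by linarith⟩

/-- with 1 ≤ k(n) < d(n) for n ≥ 1, ω = k(1)/(k(1)+d(1)),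
ω' = ∑_{n=2}^∞ k(n)/(k(n)+d(n)) (assumed summable), and ω' < ω < 1/2,
for all n ≥ 1 one has ω ≤ t(n)/r(n) ≤ ω + ω' < 2ω. -/
theorem stmt_2 (d k : ℕ → ℕ) (hd0 : d 0 = 1) (hk0 : k 0 = 0)
    (hk : ∀ n, 1 ≤ n → 1 ≤ k n) (hkd : ∀ n, 1 ≤ n → k n < d n)
    (r t : ℕ → ℕ)
    (hr : ∀ n, r n = ∏ j ∈ Finset.range (n + 1), (d j + k j))
    (ht0 : t 0 = 0)
    (ht : ∀ n, t (n + 1) = d (n + 1) * t n + k (n + 1) * (r n - t n))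
    (ω ω' : ℝ)
    (hω : ω = (k 1 : ℝ) / ((k 1 : ℝ) + (d 1 : ℝ)))
    (hsum : Summable (fun n : ℕ => (k (n + 2) : ℝ) / ((k (n + 2) : ℝ) + (d (n + 2) : ℝ))))
    (hω' : ω' = ∑' n : ℕ, (k (n + 2) : ℝ) / ((k (n + 2) : ℝ) + (d (n + 2) : ℝ)))
    (h1 : ω' < ω) (h2 : ω < 1 / 2) :
    ∀ n : ℕ, 1 ≤ n →
      ω ≤ (t n : ℝ) / (r n : ℝ) ∧ (t n : ℝ) / (r n : ℝ) ≤ ω + ω' ∧ ω + ω' < 2 * ω :=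
  stmt_2_general d k hd0 hkd r t hr ht0 ht ω ω' hω hsum hω' h1 h2
end

section
/- Assume d(n) ≥ 1 for all n ∈ ℕ. Then for every n ≥ 1, t(n)/r(n) ≤ ∑_{j=1}^n k(j)/(k(j)+d(j)). -/
/-! Since `r n - t n ≤ r n`, the recursion gives `t (n+1) ≤ l (n+1) * t n + k (n+1) * r n`, and
dividing by `r (n+1) = l (n+1) * r n` shows that the ratio `t n / r n` grows by at most
`k (n+1) / l (n+1)` per step; summing these increments from `t 0 / r 0 = 0` gives the bound. -/

theorem le_add_sum_Icc_of_le_add {M : Type*} [AddCommMonoid M] [PartialOrder M]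
    [IsOrderedAddMonoid M] {u a : ℕ → M} (h : ∀ n, u (n + 1) ≤ u n + a (n + 1)) (n : ℕ) :
    u n ≤ u 0 + ∑ j ∈ Finset.Icc 1 n, a j := by
  induction n with
  | zero => simp
  | succ n ih =>
    rw [Finset.sum_Icc_succ_top (by omega), ← add_assoc]
    exact (h n).trans (add_le_add_left ih _)

theorem div_mul_le_div_add_div {K : Type*} [Field K] [LinearOrder K] [IsStrictOrderedRing K]
    {a b c x y : K} (hx : 0 < x) (hy : 0 < y) (h : a ≤ y * b + c * x) :
    a / (x * y) ≤ b / x + c / y := by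
  rw [div_add_div _ _ hx.ne' hy.ne', div_le_div_iff_of_pos_right (mul_pos hx hy)]
  linarith

theorem stmt_3_general (d k : ℕ → ℕ)
    (hd : ∀ n, 1 ≤ d n)
    (r t : ℕ → ℕ)
    (hr : ∀ n, r n = ∏ j ∈ Finset.range (n + 1), (d j + k j))
    (ht0 : t 0 = 0)
    (ht : ∀ n, t (n + 1) = d (n + 1) * t n + k (n + 1) * (r n - t n)) :
    ∀ n : ℕ, 1 ≤ n →
      (t n : ℝ) / (r n : ℝ) ≤ ∑ j ∈ Finset.Icc 1 n, (k j : ℝ) / ((k j : ℝ) + (d j : ℝ)) := by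
  have hl_pos (n : ℕ) : (0 : ℝ) < k n + d n := by have := hd n; positivity
  have hr_pos (n : ℕ) : (0 : ℝ) < r n := by
    rw [hr]; exact_mod_cast Finset.prod_pos fun j _ => by have := hd j; omega
  have hr_succ (n : ℕ) : (r (n + 1) : ℝ) = r n * (k (n + 1) + d (n + 1)) := by
    rw [hr, hr, Finset.prod_range_succ]; push_cast; ring
  have ht_le (n : ℕ) : t (n + 1) ≤ (k (n + 1) + d (n + 1)) * t n + k (n + 1) * r n := by
    rw [ht]; nlinarith [Nat.mul_le_mul_left (k (n + 1)) (Nat.sub_le (r n) (t n))]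
  have step (n : ℕ) : (t (n + 1) : ℝ) / r (n + 1)
      ≤ t n / r n + k (n + 1) / (k (n + 1) + d (n + 1)) := by
    rw [hr_succ]
    exact div_mul_le_div_add_div (hr_pos n) (hl_pos (n + 1)) (by exact_mod_cast ht_le n)
  intro n _
  simpa [ht0] using le_add_sum_Icc_of_le_add (u := fun n => (t n : ℝ) / r n) step n

/-- with d(n) ≥ 1 for all n, for every n ≥ 1 one has
t(n)/r(n) ≤ ∑_{j=1}^n k(j)/(k(j)+d(j)). -/
theorem stmt_3 (d k : ℕ → ℕ) (hd0 : d 0 = 1) (hk0 : k 0 = 0)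
    (hd : ∀ n, 1 ≤ d n)
    (r t : ℕ → ℕ)
    (hr : ∀ n, r n = ∏ j ∈ Finset.range (n + 1), (d j + k j))
    (ht0 : t 0 = 0)
    (ht : ∀ n, t (n + 1) = d (n + 1) * t n + k (n + 1) * (r n - t n)) :
    ∀ n : ℕ, 1 ≤ n →
      (t n : ℝ) / (r n : ℝ) ≤ ∑ j ∈ Finset.Icc 1 n, (k j : ℝ) / ((k j : ℝ) + (d j : ℝ)) :=
  stmt_3_general d k hd r t hr ht0 ht
end

section
/- Let X and Y be nonempty compact metric spaces with X path connected, and let Q : C(X,ℝ) → C(Y,ℝ) be a Markov operator. Then for every ε > 0 and every finite set F ⊆ C(X,ℝ) there exists N₀ ∈ ℕ such that for every integer N ≥ N₀ there exist continuous functions g_1, g_2, …, g_N : Y → X with ‖Q(f) − (1/N) ∑_{j=1}^N f ∘ g_j‖_∞ < ε for all f ∈ F. -/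
/-!
Evaluating `Q` at a point of `Y` gives a state on `C(X, ℝ)`; by Hahn–Banach it agrees on `F`, up to
any error, with a finite convex combination of point evaluations. Gluing these along a partition of
unity on `Y` gives `Q f ≈ ∑ i, f (x i) • u i` with continuous weights `u i ≥ 0` summing to `1`.

To realise such a combination by `N` maps, index it as `x 0, …, x r`, join these points by a path
`P : ℝ → X` with `P q = x q`, and put `g j y = P (s j y)` with
`s j y = ∑ i < r, (1 - ramp (N * W i y - j))`, which counts, up to unit-width linear ramps, the
cumulative weights `W i = u 0 + ⋯ + u i` lying below `j / N`. If no ramp is active at `j`, then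
`f (g j y)` equals an explicit staircase expression whose average over `j` is exactly
`∑ q, u q y * f (x q)`: the ramps at the integers sum exactly to `N * W i`, and Abel summation does
the rest. Each `W i` activates the ramp of at most one `j`, so the error is `O(r² ‖f‖ / N)`.
-/

open Finset

universe u

noncomputable def ramp (x : ℝ) : ℝ := max 0 (min 1 x)

lemma ramp_nonneg (x : ℝ) : 0 ≤ ramp x := le_max_left _ _

lemma ramp_le_one (x : ℝ) : ramp x ≤ 1 := max_le zero_le_one (min_le_left _ _)

lemma ramp_of_nonpos {x : ℝ} (hx : x ≤ 0) : ramp x = 0 :=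
  max_eq_left ((min_le_right _ _).trans hx)

lemma ramp_of_one_le {x : ℝ} (hx : 1 ≤ x) : ramp x = 1 := by
  rw [ramp, min_eq_left hx, max_eq_right zero_le_one]

lemma ramp_of_le_one {x : ℝ} (h0 : 0 ≤ x) (h1 : x ≤ 1) : ramp x = x := by
  rw [ramp, min_eq_right h1, max_eq_right h0]

lemma monotone_ramp : Monotone ramp := fun _ _ h => max_le_max le_rfl (min_le_min le_rfl h)

@[fun_prop]
lemma continuous_ramp : Continuous ramp := by
  unfold ramp; fun_prop

lemma sum_range_ramp_sub {N : ℕ} {a : ℝ} (ha : 0 ≤ a) (haN : a ≤ N) :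
    ∑ j ∈ range N, ramp (a - j) = a := by
  induction N generalizing a with
  | zero => simp [le_antisymm (by simpa using haN) ha]
  | succ N ih =>
    rw [sum_range_succ']
    by_cases h1 : 1 ≤ a
    · have hshift : ∀ j : ℕ, a - ((j + 1 : ℕ) : ℝ) = (a - 1) - j := fun j => by push_cast; ring
      simp only [hshift, ih (sub_nonneg.2 h1) (by push_cast at haN; linarith)]
      rw [Nat.cast_zero, sub_zero, ramp_of_one_le h1]
      ring
    · push Not at h1
      rw [sum_eq_zero fun j _ => ramp_of_nonpos (by push_cast; linarith), Nat.cast_zero, sub_zero,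
        ramp_of_le_one ha h1.le, zero_add]

lemma card_filter_zero_lt_sub_lt_one_le_one (s : Finset ℕ) (a : ℝ) :
    (s.filter fun j : ℕ => 0 < a - j ∧ a - j < 1).card ≤ 1 := by
  refine card_le_one.2 fun j hj k hk => ?_
  simp only [mem_filter] at hj hk
  have hjk : (j : ℝ) < k + 1 := by linarith
  have hkj : (k : ℝ) < j + 1 := by linarith
  norm_cast at hjk hkj
  omega

lemma exists_staircase_of_monotone_zero_one {κ : ℕ → ℝ} (hκ : Monotone κ) (g : ℕ → ℝ) (r : ℕ)
    (h01 : ∀ i < r, κ i = 0 ∨ κ i = 1) :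
    ∃ c ≤ r, ∑ i ∈ range r, (1 - κ i) = c ∧
      ∑ i ∈ range r, (g (i + 1) - g i) * κ i = g r - g c := by
  induction r generalizing κ g with
  | zero => exact ⟨0, le_rfl, by simp⟩
  | succ r ih =>
    rcases h01 0 r.succ_pos with h0 | h0
    · obtain ⟨c, hcr, hsum, hD⟩ := ih (κ := fun i => κ (i + 1))
        (fun _ _ h => hκ (Nat.succ_le_succ h)) (fun i => g (i + 1))
        fun i hi => h01 (i + 1) (by omega)
      refine ⟨c + 1, by omega, ?_, ?_⟩
      · rw [sum_range_succ', hsum, h0]; push_cast; ring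
      · rw [sum_range_succ', hD, h0, mul_zero, add_zero]
    · have hone : ∀ i ∈ range (r + 1), κ i = 1 := fun i hi =>
        (h01 i (mem_range.1 hi)).resolve_left fun h => by
          linarith [h0 ▸ hκ (Nat.zero_le i)]
      refine ⟨0, Nat.zero_le _, ?_, ?_⟩
      · rw [sum_congr rfl fun i hi => by rw [hone i hi, sub_self]]; simp
      · rw [sum_congr rfl fun i hi => by rw [hone i hi, mul_one], sum_range_sub]

lemma abs_staircase_sub_le {a : ℕ → ℝ} (ha : Monotone a) (r : ℕ) (t : ℝ) {φ : ℝ → ℝ} {B : ℝ}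
    (hφ : ∀ s, |φ s| ≤ B) :
    |φ (∑ i ∈ range r, (1 - ramp (a i - t)))
        - (φ r - ∑ i ∈ range r, (φ (i + 1) - φ i) * ramp (a i - t))|
      ≤ 2 * B * (r + 1) * ((range r).filter fun i => 0 < a i - t ∧ a i - t < 1).card := by
  set κ : ℕ → ℝ := fun i => ramp (a i - t)
  have hB : 0 ≤ B := (abs_nonneg _).trans (hφ 0)
  rcases Nat.eq_zero_or_pos ((range r).filter fun i => 0 < a i - t ∧ a i - t < 1).card with
    hgood | hbad
  · have h01 : ∀ i < r, κ i = 0 ∨ κ i = 1 := fun i hi => by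
      have := filter_eq_empty_iff.1 (card_eq_zero.1 hgood) (mem_range.2 hi)
      rcases le_or_gt (a i - t) 0 with h0 | h0
      · exact Or.inl (ramp_of_nonpos h0)
      · exact Or.inr (ramp_of_one_le (not_lt.1 fun h1 => this ⟨h0, h1⟩))
    obtain ⟨c, -, hs, hD⟩ := exists_staircase_of_monotone_zero_one
      (fun _ _ h => monotone_ramp (sub_le_sub_right (ha h) t)) (fun n : ℕ => φ n) r h01
    push_cast at hD
    rw [hs, hD, hgood]
    simp
  · have hL : |φ r - ∑ i ∈ range r, (φ (i + 1) - φ i) * κ i| ≤ B + 2 * B * r := by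
      refine (abs_sub _ _).trans (add_le_add (hφ _) ?_)
      refine (abs_sum_le_sum_abs _ _).trans ?_
      calc ∑ i ∈ range r, |(φ (i + 1) - φ i) * κ i|
          ≤ ∑ i ∈ range r, 2 * B := sum_le_sum fun i _ => by
            rw [abs_mul, abs_of_nonneg (ramp_nonneg _)]
            have := (abs_sub _ _).trans (add_le_add (hφ (i + 1)) (hφ i))
            nlinarith [ramp_nonneg (a i - t), ramp_le_one (a i - t), abs_nonneg (φ (i + 1) - φ i)]
        _ = 2 * B * r := by rw [sum_const, card_range, nsmul_eq_mul]; ring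
    have hcard : (1 : ℝ) ≤ ((range r).filter fun i => 0 < a i - t ∧ a i - t < 1).card := by
      exact_mod_cast hbad
    calc _ ≤ B + (B + 2 * B * r) := (abs_sub _ _).trans (add_le_add (hφ _) hL)
      _ = 2 * B * (r + 1) * 1 := by ring
      _ ≤ _ := by gcongr

lemma abs_sub_average_staircase_le {N : ℕ} (hN : 0 < N) {W : ℕ → ℝ} (hW : Monotone W) {r : ℕ}
    (hW0 : ∀ i < r, 0 ≤ W i) (hW1 : ∀ i < r, W i ≤ 1) {φ : ℝ → ℝ} {B : ℝ}
    (hφ : ∀ s, |φ s| ≤ B) :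
    |(φ r - ∑ i ∈ range r, (φ (i + 1) - φ i) * W i)
        - (N : ℝ)⁻¹ * ∑ j ∈ range N, φ (∑ i ∈ range r, (1 - ramp (N * W i - j)))|
      ≤ 2 * B * (r + 1) * r / N := by
  have hNR : (0 : ℝ) < N := by exact_mod_cast hN
  set L : ℕ → ℝ := fun j => φ r - ∑ i ∈ range r, (φ (i + 1) - φ i) * ramp (N * W i - j)
  have hLsum : ∑ j ∈ range N, L j = N * (φ r - ∑ i ∈ range r, (φ (i + 1) - φ i) * W i) := by
    simp only [L, sum_sub_distrib, sum_const, card_range, nsmul_eq_mul, mul_sub, mul_sum]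
    rw [sum_comm]
    congr 1
    refine sum_congr rfl fun i hi => ?_
    have hi := mem_range.1 hi
    rw [← mul_sum, sum_range_ramp_sub (by nlinarith [hW0 i hi]) (by nlinarith [hW1 i hi])]
    ring
  have hcount : ∑ j ∈ range N,
      (((range r).filter fun i => 0 < N * W i - j ∧ N * W i - j < 1).card : ℝ) ≤ r := by
    calc _ = ∑ i ∈ range r,
          (((range N).filter fun j : ℕ => 0 < N * W i - j ∧ N * W i - j < 1).card : ℝ) := by
          simp only [card_filter, Nat.cast_sum]; exact sum_comm
      _ ≤ ∑ i ∈ range r, 1 :=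
          sum_le_sum fun i _ => by exact_mod_cast card_filter_zero_lt_sub_lt_one_le_one _ _
      _ = r := by simp
  have heq : (φ r - ∑ i ∈ range r, (φ (i + 1) - φ i) * W i)
        - (N : ℝ)⁻¹ * ∑ j ∈ range N, φ (∑ i ∈ range r, (1 - ramp (N * W i - j)))
      = (N : ℝ)⁻¹ * ∑ j ∈ range N, (L j - φ (∑ i ∈ range r, (1 - ramp (N * W i - j)))) := by
    rw [sum_sub_distrib, hLsum]
    field_simp
  rw [heq, abs_mul, abs_inv, abs_of_pos hNR, inv_mul_le_iff₀ hNR]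
  calc _ ≤ ∑ j ∈ range N, |L j - φ (∑ i ∈ range r, (1 - ramp (N * W i - j)))| :=
        abs_sum_le_sum_abs _ _
    _ ≤ ∑ j ∈ range N, 2 * B * (r + 1) *
          (((range r).filter fun i => 0 < N * W i - j ∧ N * W i - j < 1).card : ℝ) :=
        sum_le_sum fun j _ => by
          rw [abs_sub_comm]
          exact abs_staircase_sub_le (fun _ _ h => by have := hW h; gcongr) r j hφ
    _ ≤ 2 * B * (r + 1) * r := by
        rw [← mul_sum]
        have hB : 0 ≤ B := (abs_nonneg _).trans (hφ 0)
        gcongr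
    _ = N * (2 * B * (r + 1) * r / N) := by field_simp

lemma sum_mul_eq_sub_sum_mul_partialSum {p : ℕ → ℝ} {r : ℕ}
    (hp : ∑ q ∈ range (r + 1), p q = 1) (g : ℕ → ℝ) :
    ∑ q ∈ range (r + 1), g q * p q
      = g r - ∑ i ∈ range r, (g (i + 1) - g i) * ∑ q ∈ range (i + 1), p q := by
  simpa [hp] using sum_range_by_parts g p (r + 1)

lemma exists_sum_range_comp_eq_sum {ι : Type*} [Fintype ι] [Nonempty ι] :
    ∃ (r : ℕ) (idx : ℕ → ι), ∀ {M : Type*} [AddCommMonoid M] (F : ι → M),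
      ∑ q ∈ range (r + 1), F (idx q) = ∑ i, F i := by
  obtain ⟨r, hr⟩ := Nat.exists_eq_succ_of_ne_zero (Fintype.card_ne_zero (α := ι))
  let e := (Fintype.equivFinOfCardEq hr).symm
  refine ⟨r, fun q => e (Fin.ofNat (r + 1) q), fun F => ?_⟩
  rw [← Fin.sum_univ_eq_sum_range (fun q => F (e (Fin.ofNat (r + 1) q)))]
  simpa using e.sum_comp F

section

variable {X : Type*} {Y : Type u} [TopologicalSpace X] [TopologicalSpace Y] [CompactSpace Y]

lemma exists_continuousMap_natCast_eq [PathConnectedSpace X] (z : ℕ → X) (r : ℕ) :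
    ∃ P : C(ℝ, X), ∀ i ≤ r, P i = z i := by
  induction r with
  | zero => exact ⟨.const ℝ (z 0), fun i hi => by rw [Nat.le_zero.1 hi]; rfl⟩
  | succ r ih =>
    obtain ⟨P, hP⟩ := ih
    let γ := PathConnectedSpace.somePath (z r) (z (r + 1))
    refine ⟨⟨fun s => if s ≤ r then P s else γ.extend (s - r), ?_⟩, fun i hi => ?_⟩
    · refine Continuous.if_le P.continuous (by fun_prop) continuous_id continuous_const ?_
      rintro s rfl
      rw [hP r le_rfl, sub_self, Path.extend_zero]
    · rcases Nat.lt_succ_iff_lt_or_eq.1 (Nat.lt_succ_of_le hi) with hi | rfl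
      · have : (i : ℝ) ≤ r := by exact_mod_cast Nat.lt_succ_iff.1 hi
        simp [this, hP i (Nat.lt_succ_iff.1 hi)]
      · simp

theorem exists_comp_average_approx_of_nat [CompactSpace X] [PathConnectedSpace X] (z : ℕ → X)
    {u : ℕ → C(Y, ℝ)} (hu : ∀ q, 0 ≤ u q) {r : ℕ} (hsum : ∑ q ∈ range (r + 1), u q = 1)
    {N : ℕ} (hN : 0 < N) :
    ∃ g : Fin N → C(Y, X), ∀ f : C(X, ℝ),
      ‖∑ q ∈ range (r + 1), f (z q) • u q - (N : ℝ)⁻¹ • ∑ j, f.comp (g j)‖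
        ≤ 2 * ‖f‖ * (r + 1) * r / N := by
  obtain ⟨P, hP⟩ := exists_continuousMap_natCast_eq z r
  let W : ℕ → Y → ℝ := fun i y => ∑ q ∈ range (i + 1), u q y
  let s : ℕ → C(Y, ℝ) := fun j =>
    ⟨fun y => ∑ i ∈ range r, (1 - ramp (N * W i y - j)), by fun_prop⟩
  refine ⟨fun j => P.comp (s j), fun f => (ContinuousMap.norm_le _ (by positivity)).2 fun y => ?_⟩
  have hsum_y : ∑ q ∈ range (r + 1), u q y = 1 := by
    simpa using congr_arg (fun v : C(Y, ℝ) => v y) hsum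
  have hW : Monotone fun i => W i y := by
    intro i i' h
    exact sum_le_sum_of_subset_of_nonneg (range_subset_range.2 (Nat.succ_le_succ h))
      fun q _ _ => hu q y
  have hW1 : ∀ i < r, W i y ≤ 1 := fun i hi => (hW (by omega : i ≤ r)).trans_eq hsum_y
  have hW0 : ∀ i < r, 0 ≤ W i y := fun i _ => sum_nonneg fun q _ => hu q y
  have habel := sum_mul_eq_sub_sum_mul_partialSum hsum_y fun q => f (P q)
  rw [sum_congr rfl fun q hq => by rw [hP q (Nat.lt_succ_iff.1 (mem_range.1 hq))]] at habel
  push_cast at habel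
  have hφ : ∀ t, |f (P t)| ≤ ‖f‖ := fun t => f.norm_coe_le_norm (P t)
  have key := abs_sub_average_staircase_le hN hW hW0 hW1 hφ
  simp only [ContinuousMap.sub_apply, ContinuousMap.smul_apply, ContinuousMap.coe_sum,
    Finset.sum_apply, ContinuousMap.comp_apply, smul_eq_mul, Real.norm_eq_abs]
  rw [Fin.sum_univ_eq_sum_range (fun j => f (P (s j y))) N, habel]
  exact key

theorem exists_comp_average_approx [CompactSpace X] [PathConnectedSpace X] [Nonempty Y]
    {ι : Type*} [Fintype ι] (x : ι → X) {u : ι → C(Y, ℝ)} (hu : ∀ i, 0 ≤ u i)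
    (hsum : ∑ i, u i = 1) :
    ∃ C : ℝ, ∀ N : ℕ, 0 < N → ∃ g : Fin N → C(Y, X), ∀ f : C(X, ℝ),
      ‖∑ i, f (x i) • u i - (N : ℝ)⁻¹ • ∑ j, f.comp (g j)‖ ≤ C * ‖f‖ / N := by
  have : Nonempty ι := by
    by_contra h
    obtain ⟨y⟩ := ‹Nonempty Y›
    simpa [not_nonempty_iff.1 h] using congr_arg (fun v : C(Y, ℝ) => v y) hsum
  obtain ⟨r, idx, hidx⟩ := exists_sum_range_comp_eq_sum (ι := ι)
  refine ⟨2 * (r + 1) * r, fun N hN => ?_⟩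
  obtain ⟨g, hg⟩ := exists_comp_average_approx_of_nat (x ∘ idx) (fun q => hu (idx q))
    ((hidx u).trans hsum) hN
  refine ⟨g, fun f => ?_⟩
  rw [← hidx fun i => f (x i) • u i]
  exact (hg f).trans_eq (by ring)

theorem mem_closure_convexHull_eval {ι : Type*} [Fintype ι] (ℓ : C(X, ℝ) →ₗ[ℝ] ℝ)
    (hpos : ∀ f, 0 ≤ f → 0 ≤ ℓ f) (hunit : ℓ 1 = 1) (F : ι → C(X, ℝ)) :
    (fun i => ℓ (F i)) ∈ closure (convexHull ℝ (Set.range fun x i => F i x)) := by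
  classical
  by_contra hv
  obtain ⟨L, c, hLc, hcL⟩ := geometric_hahn_banach_closed_point
    (convex_convexHull ℝ _).closure isClosed_closure hv
  let e : ι → ℝ := fun i => L fun j => if i = j then 1 else 0
  let g : C(X, ℝ) := ∑ i, e i • F i
  have hg : ∀ x, g x = L fun i => F i x := fun x => by
    simpa [g, e, mul_comm] using (L.toLinearMap.pi_apply_eq_sum_univ fun i => F i x).symm
  have hℓg : ℓ g = L fun i => ℓ (F i) := by
    simpa [g, e, mul_comm] using (L.toLinearMap.pi_apply_eq_sum_univ fun i => ℓ (F i)).symm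
  have hgc : 0 ≤ c • (1 : C(X, ℝ)) - g := fun x => by
    simpa [hg x] using (hLc _ (subset_closure (subset_convexHull ℝ _ ⟨x, rfl⟩))).le
  have := hpos _ hgc
  rw [map_sub, map_smul, hunit, hℓg, smul_eq_mul, mul_one] at this
  linarith

theorem exists_convexCombination_eval_approx {ι : Type*} [Fintype ι] (ℓ : C(X, ℝ) →ₗ[ℝ] ℝ)
    (hpos : ∀ f, 0 ≤ f → 0 ≤ ℓ f) (hunit : ℓ 1 = 1) (F : ι → C(X, ℝ)) {δ : ℝ} (hδ : 0 < δ) :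
    ∃ (κ : Type) (_ : Fintype κ) (w : κ → ℝ) (x : κ → X), (∀ k, 0 ≤ w k) ∧ ∑ k, w k = 1 ∧
      ∀ i, |ℓ (F i) - ∑ k, w k * F i (x k)| < δ := by
  obtain ⟨p, hp, hdist⟩ :=
    Metric.mem_closure_iff.1 (mem_closure_convexHull_eval ℓ hpos hunit F) δ hδ
  obtain ⟨κ, _, w, z, hw0, hw1, hz, rfl⟩ := mem_convexHull_iff_exists_fintype.1 hp
  choose x hx using hz
  refine ⟨κ, _, w, x, hw0, hw1, fun i => ?_⟩
  simpa [Real.dist_eq, ← hx] using (dist_le_pi_dist _ _ i).trans_lt hdist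

theorem PartitionOfUnity.norm_sub_sum_smul_le {ι : Type*} [Fintype ι]
    (ρ : PartitionOfUnity ι Y Set.univ) {U : ι → Set Y} (hρ : ρ.IsSubordinate U) (g : C(Y, ℝ))
    (v : ι → ℝ) {η : ℝ} (hη : 0 ≤ η) (hv : ∀ i, ∀ y ∈ U i, |g y - v i| ≤ η) :
    ‖g - ∑ i, v i • ρ i‖ ≤ η := by
  refine (ContinuousMap.norm_le _ hη).2 fun y => ?_
  have hmem := ρ.finsum_smul_mem_convex (g := fun i _ => v i) (Set.mem_univ y)
    (fun i hi => Metric.mem_closedBall.2 ?_) (convex_closedBall (g y) η)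
  · rw [finsum_eq_sum_of_fintype, Metric.mem_closedBall, dist_comm, Real.dist_eq] at hmem
    simpa [mul_comm] using hmem
  · rw [Real.dist_eq, abs_sub_comm]
    exact hv i y (hρ i (subset_tsupport _ hi))

theorem exists_continuous_weights_approx [T2Space Y] (Q : C(X, ℝ) →ₗ[ℝ] C(Y, ℝ))
    (hpos : ∀ f, 0 ≤ f → 0 ≤ Q f) (hunit : Q 1 = 1)
    (F : Finset C(X, ℝ)) {ε : ℝ} (hε : 0 < ε) :
    ∃ (ι : Type u) (_ : Fintype ι) (u : ι → C(Y, ℝ)) (x : ι → X), (∀ i, 0 ≤ u i) ∧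
      ∑ i, u i = 1 ∧ ∀ f ∈ F, ‖Q f - ∑ i, f (x i) • u i‖ ≤ ε := by
  let G : Y → (F → ℝ) := fun y f => Q f y
  have hG : Continuous G := continuous_pi fun f => (Q f).continuous
  let U : Y → Set Y := fun c => G ⁻¹' Metric.ball (G c) (ε / 2)
  have hU : ∀ c, IsOpen (U c) := fun c => Metric.isOpen_ball.preimage hG
  obtain ⟨T, hT⟩ := CompactSpace.elim_nhds_subcover U fun c =>
    (hU c).mem_nhds (Metric.mem_ball_self (half_pos hε))
  obtain ⟨ρ, hρ⟩ := PartitionOfUnity.exists_isSubordinate isClosed_univ (fun c : T => U c)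
    (fun c => hU c) fun y _ => by
      obtain ⟨c, hc, hy⟩ := Set.mem_iUnion₂.1 (hT.symm ▸ Set.mem_univ y : y ∈ ⋃ c ∈ T, U c)
      exact Set.mem_iUnion.2 ⟨⟨c, hc⟩, hy⟩
  choose κ _ w x hw0 hw1 hwx using fun c : T =>
    exists_convexCombination_eval_approx ((ContinuousMap.evalCLM ℝ (c : Y)).toLinearMap ∘ₗ Q)
      (fun g hg => hpos g hg c) (by simp [hunit]) (fun f : F => (f : C(X, ℝ))) (half_pos hε)
  refine ⟨Σ c : T, κ c, inferInstance, fun p => w p.1 p.2 • ρ p.1, fun p => x p.1 p.2,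
    fun p => smul_nonneg (hw0 _ _) fun y => ρ.nonneg _ y, ?_, fun f hf => ?_⟩
  · ext y
    simpa [Fintype.sum_sigma, ← Finset.sum_smul, hw1, finsum_eq_sum_of_fintype] using
      ρ.sum_eq_one (Set.mem_univ y)
  · have hsum : ∑ p : Σ c : T, κ c, f (x p.1 p.2) • w p.1 p.2 • ρ p.1
        = ∑ c, (∑ k, w c k * f (x c k)) • ρ c := by
      simp [Fintype.sum_sigma, Finset.sum_smul, smul_smul, mul_comm]
    rw [hsum]
    refine ρ.norm_sub_sum_smul_le hρ _ _ hε.le fun c y hy => ?_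
    have hyc : |Q f y - Q f c| < ε / 2 := by
      simpa [G, Real.dist_eq] using (dist_le_pi_dist _ _ ⟨f, hf⟩).trans_lt hy
    have hc : |Q f c - ∑ k, w c k * f (x c k)| < ε / 2 := by simpa using hwx c ⟨f, hf⟩
    linarith [abs_sub_le (Q f y) (Q f c) (∑ k, w c k * f (x c k))]

end

open Filter in
theorem stmt_6_general {X Y : Type*} [MetricSpace X] [CompactSpace X]
    [PathConnectedSpace X]
    [MetricSpace Y] [CompactSpace Y] [Nonempty Y]
    (Q : C(X, ℝ) →ₗ[ℝ] C(Y, ℝ))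
    (hpos : ∀ f : C(X, ℝ), 0 ≤ f → 0 ≤ Q f) (hunit : Q 1 = 1)
    (ε : ℝ) (hε : 0 < ε) (F : Finset C(X, ℝ)) :
    ∃ N₀ : ℕ, ∀ N : ℕ, N₀ ≤ N →
      ∃ g : Fin N → C(Y, X), ∀ f ∈ F,
        ‖Q f - (N : ℝ)⁻¹ • ∑ j : Fin N, f.comp (g j)‖ < ε := by
  obtain ⟨ι, _, u, x, hu0, hu1, hQu⟩ :=
    exists_continuous_weights_approx Q hpos hunit F (half_pos hε)
  obtain ⟨C, hC⟩ := exists_comp_average_approx x hu0 hu1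
  have hlarge : ∀ᶠ N : ℕ in atTop, 0 < N ∧ ∀ f ∈ F, C * ‖f‖ / N < ε / 2 :=
    (eventually_gt_atTop 0).and <| (eventually_all_finset F).2 fun f _ =>
      (tendsto_const_div_atTop_nhds_zero_nat (C * ‖f‖)).eventually (gt_mem_nhds (half_pos hε))
  obtain ⟨N₀, hN₀⟩ := eventually_atTop.1 hlarge
  refine ⟨N₀, fun N hN => ?_⟩
  obtain ⟨hNpos, hNlarge⟩ := hN₀ N hN
  obtain ⟨g, hg⟩ := hC N hNpos
  refine ⟨g, fun f hf => ?_⟩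
  calc _ ≤ ‖Q f - ∑ i, f (x i) • u i‖ + ‖∑ i, f (x i) • u i - (N : ℝ)⁻¹ • ∑ j, f.comp (g j)‖ :=
        norm_sub_le_norm_sub_add_norm_sub _ _ _
    _ < ε := by linarith [hQu f hf, hg f, hNlarge f hf]

/-- if X, Y are nonempty compact metric spaces with X path connected and
Q : C(X,ℝ) → C(Y,ℝ) is a Markov operator (linear, positive, unital), then for every ε > 0
and every finite set F ⊆ C(X,ℝ) there is N₀ such that for every N ≥ N₀ there are continuous
maps g_1, …, g_N : Y → X with ‖Q f − (1/N) ∑_j f ∘ g_j‖ < ε for all f ∈ F. -/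
theorem stmt_6 {X Y : Type*} [MetricSpace X] [CompactSpace X] [Nonempty X]
    [PathConnectedSpace X]
    [MetricSpace Y] [CompactSpace Y] [Nonempty Y]
    (Q : C(X, ℝ) →ₗ[ℝ] C(Y, ℝ))
    (hpos : ∀ f : C(X, ℝ), 0 ≤ f → 0 ≤ Q f) (hunit : Q 1 = 1)
    (ε : ℝ) (hε : 0 < ε) (F : Finset C(X, ℝ)) :
    ∃ N₀ : ℕ, ∀ N : ℕ, N₀ ≤ N →
      ∃ g : Fin N → C(Y, X), ∀ f ∈ F,
        ‖Q f - (N : ℝ)⁻¹ • ∑ j : Fin N, f.comp (g j)‖ < ε :=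
  stmt_6_general Q hpos hunit ε hε F
end

section
/- Let d̃, k̃ : ℕ → ℕ with d̃(n) ≥ 1 for all n, and set l̃(n) = d̃(n) + k̃(n). Let ν : ℕ → ℕ be strictly increasing with ν(1) = 1. For m ≥ 2, set D(m) = ∏_{j=ν(m−1)+1}^{ν(m)} d̃(j) and L(m) = ∏_{j=ν(m−1)+1}^{ν(m)} l̃(j). Assume the series ∑_{n=2}^∞ k̃(n)/l̃(n) converges. Then the series ∑_{m=2}^∞ (L(m) − D(m))/L(m) converges and ∑_{m=2}^∞ (L(m) − D(m))/L(m) ≤ ∑_{n=2}^∞ k̃(n)/l̃(n). -/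
/-!
Writing `x j = k̃ j / l̃ j ∈ [0, 1]`, the `m`-th term is `1 - ∏ (1 - x j)` over the `m`-th block
`(ν (m-1), ν m]`, and the Weierstrass product inequality `1 - ∏ (1 - x j) ≤ ∑ x j` bounds it by
the block sum of the `x j`. Since `ν 1 = 1`, the blocks for `m ≥ 2` are disjoint and cover
`n ≥ 2`, so the block sums add up to `∑_{n ≥ 2} x n`.
-/

open Finset

theorem Finset.one_sub_prod_one_sub_le_sum {ι R : Type*} [CommRing R] [PartialOrder R]
    [IsOrderedRing R] (s : Finset ι) (x : ι → R) (h0 : ∀ i ∈ s, 0 ≤ x i) (h1 : ∀ i ∈ s, x i ≤ 1) :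
    1 - ∏ i ∈ s, (1 - x i) ≤ ∑ i ∈ s, x i := by
  classical
  induction s using Finset.induction_on with
  | empty => simp
  | insert a s ha ih =>
    simp only [mem_insert, forall_eq_or_imp] at h0 h1
    rw [prod_insert ha, sum_insert ha]
    have hprod_le_one : ∏ i ∈ s, (1 - x i) ≤ 1 :=
      prod_le_one (fun i hi => sub_nonneg.2 (h1.2 i hi)) fun i hi => sub_le_self _ (h0.2 i hi)
    calc 1 - (1 - x a) * ∏ i ∈ s, (1 - x i)
        = (1 - ∏ i ∈ s, (1 - x i)) + x a * ∏ i ∈ s, (1 - x i) := by ring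
      _ ≤ ∑ i ∈ s, x i + x a := add_le_add (ih h0.2 h1.2) (mul_le_of_le_one_right h0.1 hprod_le_one)
      _ = x a + ∑ i ∈ s, x i := add_comm _ _

theorem Finset.sum_range_sum_Ioc_eq_sum_Ioc {M : Type*} [AddCommMonoid M] (f : ℕ → M)
    {ν : ℕ → ℕ} (hν : Monotone ν) (N : ℕ) :
    ∑ m ∈ range N, ∑ j ∈ Ioc (ν m) (ν (m + 1)), f j = ∑ j ∈ Ioc (ν 0) (ν N), f j := by
  induction N with
  | zero => simp
  | succ N ih =>
    rw [sum_range_succ, ih, sum_Ioc_consecutive _ (hν N.zero_le) (hν N.le_succ)]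

theorem summable_sum_Ioc_of_monotone {a : ℕ → ℝ} (ha : ∀ n, 0 ≤ a n) {ν : ℕ → ℕ}
    (hν : Monotone ν) {k : ℕ} (hk : k ≤ ν 0 + 1) (hsum : Summable fun n => a (n + k)) :
    Summable (fun m => ∑ j ∈ Ioc (ν m) (ν (m + 1)), a j) ∧
      ∑' m, ∑ j ∈ Ioc (ν m) (ν (m + 1)), a j ≤ ∑' n, a (n + k) := by
  have hpartial (N : ℕ) : ∑ m ∈ range N, ∑ j ∈ Ioc (ν m) (ν (m + 1)), a j ≤ ∑' n, a (n + k) :=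
    calc ∑ m ∈ range N, ∑ j ∈ Ioc (ν m) (ν (m + 1)), a j
        = ∑ j ∈ Ioc (ν 0) (ν N), a j := sum_range_sum_Ioc_eq_sum_Ioc a hν N
      _ ≤ ∑ j ∈ Ico k (ν N + 1), a j :=
        sum_le_sum_of_subset_of_nonneg (fun j hj => by simp only [mem_Ioc, mem_Ico] at hj ⊢; omega)
          fun j _ _ => ha j
      _ = ∑ n ∈ range (ν N + 1 - k), a (n + k) := by
        rw [sum_Ico_eq_sum_range]; simp only [add_comm k]
      _ ≤ ∑' n, a (n + k) := hsum.sum_le_tsum _ fun n _ => ha (n + k)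
  have hnonneg (m : ℕ) : 0 ≤ ∑ j ∈ Ioc (ν m) (ν (m + 1)), a j := sum_nonneg fun j _ => ha j
  have hsummable := summable_of_sum_range_le hnonneg hpartial
  exact ⟨hsummable, hsummable.tsum_le_of_sum_range_le hpartial⟩

theorem Finset.prod_add_sub_prod_div_le_sum {ι : Type*} (s : Finset ι) (d k : ι → ℝ)
    (hd : ∀ i ∈ s, 0 < d i) (hk : ∀ i ∈ s, 0 ≤ k i) :
    (∏ i ∈ s, (d i + k i) - ∏ i ∈ s, d i) / ∏ i ∈ s, (d i + k i) ≤ ∑ i ∈ s, k i / (d i + k i) := by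
  have hpos : ∀ i ∈ s, 0 < d i + k i := fun i hi => add_pos_of_pos_of_nonneg (hd i hi) (hk i hi)
  calc (∏ i ∈ s, (d i + k i) - ∏ i ∈ s, d i) / ∏ i ∈ s, (d i + k i)
      = 1 - ∏ i ∈ s, (1 - k i / (d i + k i)) := by
        rw [sub_div, div_self (prod_pos hpos).ne', ← prod_div_distrib]
        congr 1
        refine prod_congr rfl fun i hi => ?_
        field_simp [(hpos i hi).ne']
        ring
    _ ≤ ∑ i ∈ s, k i / (d i + k i) :=
      one_sub_prod_one_sub_le_sum s _ (fun i hi => div_nonneg (hk i hi) (hpos i hi).le)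
        fun i hi => (div_le_one (hpos i hi)).2 (le_add_of_nonneg_left (hd i hi).le)

theorem Finset.prod_add_sub_prod_div_nonneg {ι : Type*} (s : Finset ι) (d k : ι → ℝ)
    (hd : ∀ i ∈ s, 0 ≤ d i) (hk : ∀ i ∈ s, 0 ≤ k i) :
    0 ≤ (∏ i ∈ s, (d i + k i) - ∏ i ∈ s, d i) / ∏ i ∈ s, (d i + k i) :=
  div_nonneg (sub_nonneg.2 (prod_le_prod hd fun i hi => le_add_of_nonneg_right (hk i hi)))
    (prod_nonneg fun i hi => add_nonneg (hd i hi) (hk i hi))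

/-- with l̃ = d̃ + k̃, ν strictly increasing with ν(1) = 1,
D(m) = ∏_{ν(m−1)<j≤ν(m)} d̃(j), L(m) = ∏_{ν(m−1)<j≤ν(m)} l̃(j), and assuming
∑_{n≥2} k̃(n)/l̃(n) converges, the series ∑_{m≥2} (L(m)−D(m))/L(m) converges and
is bounded by ∑_{n≥2} k̃(n)/l̃(n). -/
theorem stmt_8 (dt kt : ℕ → ℕ) (hdt : ∀ n, 1 ≤ dt n)
    (lt : ℕ → ℕ) (hlt : ∀ n, lt n = dt n + kt n)
    (ν : ℕ → ℕ) (hν : StrictMono ν) (hν1 : ν 1 = 1)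
    (D L : ℕ → ℕ)
    (hD : ∀ m, 2 ≤ m → D m = ∏ j ∈ Finset.Icc (ν (m - 1) + 1) (ν m), dt j)
    (hL : ∀ m, 2 ≤ m → L m = ∏ j ∈ Finset.Icc (ν (m - 1) + 1) (ν m), lt j)
    (hsum : Summable (fun n : ℕ => (kt (n + 2) : ℝ) / (lt (n + 2) : ℝ))) :
    Summable (fun m : ℕ => ((L (m + 2) : ℝ) - (D (m + 2) : ℝ)) / (L (m + 2) : ℝ)) ∧
    ∑' m : ℕ, ((L (m + 2) : ℝ) - (D (m + 2) : ℝ)) / (L (m + 2) : ℝ)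
      ≤ ∑' n : ℕ, (kt (n + 2) : ℝ) / (lt (n + 2) : ℝ) := by
  set a : ℕ → ℝ := fun n => (kt n : ℝ) / (lt n : ℝ)
  set block : ℕ → Finset ℕ := fun m => Ioc (ν (m + 1)) (ν (m + 1 + 1))
  have hblock (m : ℕ) : Icc (ν (m + 2 - 1) + 1) (ν (m + 2)) = block m := by
    rw [Icc_add_one_left_eq_Ioc]
    rfl
  have hratio (m : ℕ) : ((L (m + 2) : ℝ) - D (m + 2)) / L (m + 2) =
      (∏ j ∈ block m, ((dt j : ℝ) + kt j) - ∏ j ∈ block m, (dt j : ℝ)) /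
        ∏ j ∈ block m, ((dt j : ℝ) + kt j) := by
    simp only [hD (m + 2) (by omega), hL (m + 2) (by omega), hblock, hlt, Nat.cast_prod,
      Nat.cast_add]
  have hdt_pos (j : ℕ) : (0 : ℝ) < dt j := by exact_mod_cast hdt j
  have hle (m : ℕ) : ((L (m + 2) : ℝ) - D (m + 2)) / L (m + 2) ≤ ∑ j ∈ block m, a j := by
    simp only [hratio, a, hlt, Nat.cast_add]
    exact prod_add_sub_prod_div_le_sum _ _ _ (fun j _ => hdt_pos j) fun j _ => by positivity
  have hnonneg (m : ℕ) : 0 ≤ ((L (m + 2) : ℝ) - D (m + 2)) / L (m + 2) := by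
    rw [hratio]
    exact prod_add_sub_prod_div_nonneg _ _ _ (fun j _ => (hdt_pos j).le) fun j _ => by positivity
  obtain ⟨hblock_summable, hblock_tsum⟩ :=
    summable_sum_Ioc_of_monotone (a := a) (ν := fun m => ν (m + 1)) (k := 2)
      (fun n => by positivity) (fun _ _ h => hν.monotone (by omega)) (by simp [hν1]) hsum
  have hsummable := hblock_summable.of_nonneg_of_le hnonneg hle
  exact ⟨hsummable, (hsummable.tsum_le_tsum hle hblock_summable).trans hblock_tsum⟩
end

section
/- Let T : ℝ² → ℝ² be a linear bijection such that for all x ∈ ℝ², x ≥ 0 if and only if T(x) ≥ 0 (with the componentwise order on ℝ²), and such that T(1,1) = (1,1). Then either T is the identity map or T is the coordinate flip (a,b) ↦ (b,a). -/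
/-- a linear order-isomorphism of ℝ² (componentwise order) fixing the
order unit (1,1) is either the identity or the coordinate flip. -/
theorem stmt_16 (T : ℝ × ℝ →ₗ[ℝ] ℝ × ℝ) (hbij : Function.Bijective T)
    (hord : ∀ x : ℝ × ℝ, 0 ≤ x ↔ 0 ≤ T x) (hunit : T (1, 1) = (1, 1)) :
    (∀ x : ℝ × ℝ, T x = x) ∨ (∀ x : ℝ × ℝ, T x = (x.2, x.1)) := by
  set a := T (1, 0) with ha
  set b := T (0, 1) with hb
  have hrep : ∀ x : ℝ × ℝ, T x = (x.1 * a.1 + x.2 * b.1, x.1 * a.2 + x.2 * b.2) := by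
    intro x
    have hx : (x : ℝ × ℝ) = x.1 • ((1 : ℝ), (0 : ℝ)) + x.2 • ((0 : ℝ), (1 : ℝ)) := by
      ext <;> simp
    rw [hx, map_add, map_smul, map_smul, ← ha, ← hb]
    ext <;> simp [mul_comm]
  have hab : a + b = (1, 1) := by
    rw [ha, hb, ← map_add]
    have : ((1 : ℝ), (0 : ℝ)) + ((0 : ℝ), (1 : ℝ)) = ((1 : ℝ), (1 : ℝ)) := by ext <;> norm_num
    rw [this, hunit]
  have hab1 : a.1 + b.1 = 1 := congrArg Prod.fst hab
  have hab2 : a.2 + b.2 = 1 := congrArg Prod.snd hab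
  have hapos : (0 : ℝ × ℝ) ≤ a := (hord (1, 0)).1 (by constructor <;> norm_num)
  have hbpos : (0 : ℝ × ℝ) ≤ b := (hord (0, 1)).1 (by constructor <;> norm_num)
  have ha1 : (0 : ℝ) ≤ a.1 := hapos.1
  have ha2 : (0 : ℝ) ≤ a.2 := hapos.2
  have hb1 : (0 : ℝ) ≤ b.1 := hbpos.1
  have hb2 : (0 : ℝ) ≤ b.2 := hbpos.2
  -- key: a has a zero coordinate
  have hA : a.1 = 0 ∨ a.2 = 0 := by
    by_contra h
    push_neg at h
    have ha1' : 0 < a.1 := lt_of_le_of_ne ha1 (Ne.symm h.1)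
    have ha2' : 0 < a.2 := lt_of_le_of_ne ha2 (Ne.symm h.2)
    set t := min (a.1 / (b.1 + 1)) (a.2 / (b.2 + 1)) with ht
    have htpos : 0 < t := lt_min (div_pos ha1' (by linarith)) (div_pos ha2' (by linarith))
    have hm1 : t * (b.1 + 1) ≤ a.1 := by
      have := min_le_left (a.1 / (b.1 + 1)) (a.2 / (b.2 + 1))
      rw [← ht] at this
      exact (le_div_iff₀ (by linarith)).mp this
    have hm2 : t * (b.2 + 1) ≤ a.2 := by
      have := min_le_right (a.1 / (b.1 + 1)) (a.2 / (b.2 + 1))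
      rw [← ht] at this
      exact (le_div_iff₀ (by linarith)).mp this
    have hT : (0 : ℝ × ℝ) ≤ T (1, -t) := by
      rw [hrep]
      constructor <;> simp <;> nlinarith
    have := ((hord (1, -t)).2 hT).2
    simp at this
    linarith
  have hB : b.1 = 0 ∨ b.2 = 0 := by
    by_contra h
    push_neg at h
    have hb1' : 0 < b.1 := lt_of_le_of_ne hb1 (Ne.symm h.1)
    have hb2' : 0 < b.2 := lt_of_le_of_ne hb2 (Ne.symm h.2)
    set t := min (b.1 / (a.1 + 1)) (b.2 / (a.2 + 1)) with ht
    have htpos : 0 < t := lt_min (div_pos hb1' (by linarith)) (div_pos hb2' (by linarith))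
    have hm1 : t * (a.1 + 1) ≤ b.1 := by
      have := min_le_left (b.1 / (a.1 + 1)) (b.2 / (a.2 + 1))
      rw [← ht] at this
      exact (le_div_iff₀ (by linarith)).mp this
    have hm2 : t * (a.2 + 1) ≤ b.2 := by
      have := min_le_right (b.1 / (a.1 + 1)) (b.2 / (a.2 + 1))
      rw [← ht] at this
      exact (le_div_iff₀ (by linarith)).mp this
    have hT : (0 : ℝ × ℝ) ≤ T (-t, 1) := by
      rw [hrep]
      constructor <;> simp <;> nlinarith
    have := ((hord (-t, 1)).2 hT).1
    simp at this
    linarith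
  rcases hA with h1 | h2
  · -- a.1 = 0, so b.1 = 1, hence b.2 = 0 and a.2 = 1 : flip
    have hb1' : b.1 = 1 := by linarith
    have hb2' : b.2 = 0 := by
      rcases hB with h | h
      · linarith
      · exact h
    have ha2' : a.2 = 1 := by linarith
    right
    intro x
    rw [hrep, h1, hb1', hb2', ha2']
    ext <;> simp
  · -- a.2 = 0, so b.2 = 1, hence b.1 = 0 and a.1 = 1 : identity
    have hb2' : b.2 = 1 := by linarith
    have hb1' : b.1 = 0 := by
      rcases hB with h | h
      · exact h
      · linarith
    have ha1' : a.1 = 1 := by linarith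
    left
    intro x
    rw [hrep, h2, hb1', hb2', ha1']
    ext <;> simp
end
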